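/- arXiv:1909.06854 — 2 statements merged into one kernel-verified Lean document; each statement's English description precedes it below -/
import Mathlib

section
/- Assume x ≥ 0 and that at least one admissible control for (t, y) exists. Then the value V(t,x,y) = sSup { ∫_t^T P(s)·u(s) ds : u a control admissible for (t,y) } satisfies the level-set representation V(t,x,y) = sSup { z ∈ ℝ : z ≤ 0 and W(t,x,y,z) = 0 } + G(t,x), where the set { z ≤ 0 : W(t,x,y,z) = 0 } is nonempty. -/
open MeasureTheory

noncomputable section

/-- A control: measurable, valued in `[0, ubar]` a.e. on `[t, T]`. -/
def IsControl (t T ubar : ℝ) (u : ℝ → ℝ) : Prop :=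
  Measurable u ∧ ∀ᵐ s ∂(volume : Measure ℝ), s ∈ Set.Icc t T → u s ∈ Set.Icc 0 ubar

/-- Reservoir level `Y^{t,y,u}(s) = y + ∫_t^s (β(r) − u(r)) dr`. -/
def traj (t : ℝ) (β : ℝ → ℝ) (y : ℝ) (u : ℝ → ℝ) (s : ℝ) : ℝ :=
  y + ∫ r in t..s, (β r - u r)

/-- A control admissible for `(t, y)`: the trajectory stays in `K = [0, ybar]` on `[t, T]`. -/
def Admissible (t T ubar ybar : ℝ) (β : ℝ → ℝ) (y : ℝ) (u : ℝ → ℝ) : Prop :=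
  IsControl t T ubar u ∧ ∀ s ∈ Set.Icc t T, traj t β y u s ∈ Set.Icc 0 ybar

/-- Deterministic price `P(s) = x e^{b(s−t)}`. -/
def price (t x b s : ℝ) : ℝ := x * Real.exp (b * (s - t))

/-- Cost functional of the level-set (auxiliary) problem. -/
def levelCost (t T ubar ybar x b : ℝ) (β : ℝ → ℝ) (y z : ℝ) (u : ℝ → ℝ) : ℝ :=
  max (z - ∫ s in t..T, price t x b s * (u s - ubar)) 0
    + ∫ s in t..T, Metric.infDist (traj t β y u s) (Set.Icc 0 ybar)

/-- The level-set function `W`. -/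
def W (t T ubar ybar x b : ℝ) (β : ℝ → ℝ) (y z : ℝ) : ℝ :=
  sInf {c : ℝ | ∃ u, IsControl t T ubar u ∧ c = levelCost t T ubar ybar x b β y z u}

/-- `G(t,x) = ū ∫_t^T P(s) ds`. -/
def G (t T ubar x b : ℝ) : ℝ := ubar * ∫ s in t..T, price t x b s

/-!
Every admissible control `u` produces the level `z = ∫ P u - G ≤ 0` with zero level-set cost,
whence `V ≤ sup Z + G`. Conversely, if `W z = 0` there are controls for which both
`z - (∫ P u - G)` and the state-constraint penalty `∫ dist (Y, K)` are arbitrarily small.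
Trajectories are uniformly Lipschitz, so a small penalty forces `Y` into the `δ`-neighbourhood of
`K` on all of `[t, T]`. Clamping the cumulative discharge of a fixed admissible control into the
`δ`-tube around the cumulative discharge of `u` gives a monotone `ū`-Lipschitz function whose
derivative is an admissible control; the two cumulative discharges differ by at most `δ`, so
integration by parts against the `C¹` price shows that the payoffs differ by `O(δ)`.
-/

open Set Metric
open scoped NNReal

lemma csSup_eq_csSup_add_of_approx {A Z : Set ℝ} (c : ℝ) (hA : A.Nonempty)
    (hZ : BddAbove Z) (hAZ : ∀ a ∈ A, a - c ∈ Z)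
    (hZA : ∀ z ∈ Z, ∀ η > 0, ∃ a ∈ A, z + c - η ≤ a) :
    sSup A = sSup Z + c := by
  have hA_le : ∀ a ∈ A, a ≤ sSup Z + c := fun a ha => by
    linarith [le_csSup hZ (hAZ a ha)]
  have hZ_le : ∀ z ∈ Z, z ≤ sSup A - c := fun z hz => le_of_forall_sub_le fun η hη => by
    obtain ⟨a, ha, hza⟩ := hZA z hz η hη
    linarith [le_csSup ⟨_, hA_le⟩ ha]
  obtain ⟨a, ha⟩ := hA
  exact le_antisymm (csSup_le ⟨a, ha⟩ hA_le) (by linarith [csSup_le ⟨_, hAZ a ha⟩ hZ_le])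

lemma intervalIntegrable_of_abs_le {f : ℝ → ℝ} (hf : Measurable f) {C : ℝ}
    (h : ∀ s, |f s| ≤ C) (a b : ℝ) : IntervalIntegrable f volume a b :=
  (intervalIntegrable_const (c := C)).mono_fun hf.aestronglyMeasurable
    (ae_of_all _ fun s => by simpa using (h s).trans (le_abs_self C))

lemma lipschitzWith_primitive {f : ℝ → ℝ} (hf : Measurable f) {C : ℝ}
    (h : ∀ s, |f s| ≤ C) (a : ℝ) : LipschitzWith C.toNNReal fun s => ∫ r in a..s, f r := by
  refine LipschitzWith.of_dist_le' fun p q => ?_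
  have hf_int := intervalIntegrable_of_abs_le hf h
  rw [Real.dist_eq, intervalIntegral.integral_interval_sub_left (hf_int a p) (hf_int a q),
    Real.dist_eq]
  exact intervalIntegral.norm_integral_le_of_norm_le_const fun s _ =>
    (Real.norm_eq_abs _).trans_le (h s)

lemma monotone_primitive {f : ℝ → ℝ} (hf : Measurable f) {C : ℝ} (h : ∀ s, |f s| ≤ C)
    (hf₀ : ∀ s, 0 ≤ f s) (a : ℝ) : Monotone fun s => ∫ r in a..s, f r := by
  intro p q hpq
  dsimp only
  have hf_int := intervalIntegrable_of_abs_le hf h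
  have := intervalIntegral.integral_interval_sub_left (hf_int a q) (hf_int a p)
  linarith [intervalIntegral.integral_nonneg (μ := volume) hpq fun s _ => hf₀ s]

lemma Monotone.deriv_mem_Icc {f : ℝ → ℝ} (hf : Monotone f) {c : ℝ≥0}
    (hc : LipschitzWith c f) (s : ℝ) : deriv f s ∈ Icc 0 (c : ℝ) :=
  ⟨hf.deriv_nonneg, (le_abs_self _).trans (norm_deriv_le_of_lipschitz hc)⟩

lemma mul_le_integral_of_lipschitzWith {d : ℝ → ℝ} {L a b δ s₀ : ℝ} (hL : 0 < L)
    (hd₀ : ∀ s, 0 ≤ d s) (hd : LipschitzWith L.toNNReal d) (hs₀ : s₀ ∈ Icc a b)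
    (hδ : 0 < δ) (hδs₀ : δ ≤ d s₀) :
    min (δ / (2 * L)) ((b - a) / 2) * (δ / 2) ≤ ∫ s in a..b, d s := by
  set ρ := min (δ / (2 * L)) ((b - a) / 2)
  have hρ₀ : 0 ≤ ρ := le_min (by positivity) (by linarith [hs₀.1, hs₀.2])
  have hρ_le : ρ ≤ (b - a) / 2 := min_le_right _ _
  have hLρ : L * ρ ≤ δ / 2 := by
    calc L * ρ ≤ L * (δ / (2 * L)) := by gcongr; exact min_le_left _ _
      _ = δ / 2 := by field_simp
  obtain ⟨s₁, has₁, hs₁b, hs₁s₀⟩ : ∃ s₁, a ≤ s₁ ∧ s₁ + ρ ≤ b ∧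
      ∀ r ∈ Icc s₁ (s₁ + ρ), |r - s₀| ≤ ρ := by
    rcases le_total s₀ ((a + b) / 2) with h | h
    · exact ⟨s₀, hs₀.1, by linarith,
        fun r hr => abs_le.mpr ⟨by linarith [hr.1], by linarith [hr.2]⟩⟩
    · exact ⟨s₀ - ρ, by linarith, by linarith [hs₀.2],
        fun r hr => abs_le.mpr ⟨by linarith [hr.1], by linarith [hr.2]⟩⟩
  have hd_ge : ∀ r ∈ Icc s₁ (s₁ + ρ), δ / 2 ≤ d r := fun r hr => by
    have h₁ : |d r - d s₀| ≤ L * |r - s₀| := by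
      simpa only [Real.dist_eq, Real.coe_toNNReal _ hL.le] using hd.dist_le_mul r s₀
    have h₂ : L * |r - s₀| ≤ L * ρ := by gcongr; exact hs₁s₀ r hr
    linarith [(abs_le.mp h₁).1]
  calc ρ * (δ / 2) = ∫ _ in s₁..s₁ + ρ, δ / 2 := by simp; ring
    _ ≤ ∫ s in s₁..s₁ + ρ, d s :=
      intervalIntegral.integral_mono_on (by linarith) intervalIntegrable_const
        (hd.continuous.intervalIntegrable _ _) hd_ge
    _ ≤ ∫ s in a..b, d s :=
      intervalIntegral.integral_mono_interval has₁ (by linarith) hs₁b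
        (ae_of_all _ fun s => hd₀ s) (hd.continuous.intervalIntegrable a b)

lemma abs_integral_mul_le_of_abs_primitive_le {P w : ℝ → ℝ} {a b ε : ℝ} (hab : a ≤ b)
    (hP : AbsolutelyContinuousOnInterval P a b) (hw : IntervalIntegrable w volume a b)
    (hε : ∀ s ∈ Icc a b, |∫ r in a..s, w r| ≤ ε) :
    |∫ s in a..b, P s * w s| ≤ (|P b| + ∫ s in a..b, |deriv P s|) * ε := by
  set D := fun s => ∫ r in a..s, w r
  have hD : AbsolutelyContinuousOnInterval D a b :=
    hw.absolutelyContinuousOnInterval_intervalIntegral left_mem_uIcc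
  have h_deriv : ∫ s in a..b, P s * w s = ∫ s in a..b, P s * deriv D s := by
    refine intervalIntegral.integral_congr_ae ?_
    filter_upwards [hw.ae_hasDerivAt_integral] with s hs hs_mem
    rw [(hs (uIoc_subset_uIcc hs_mem) a left_mem_uIcc).deriv]
  have h_rest : |∫ s in a..b, deriv P s * D s| ≤ (∫ s in a..b, |deriv P s|) * ε := by
    rw [← intervalIntegral.integral_mul_const]
    refine intervalIntegral.norm_integral_le_of_norm_le (f := fun s => deriv P s * D s) hab
      (ae_of_all _ fun s hs => ?_) (hP.intervalIntegrable_deriv.abs.mul_const ε)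
    rw [Real.norm_eq_abs, abs_mul]
    exact mul_le_mul_of_nonneg_left (hε s (Ioc_subset_Icc_self hs)) (abs_nonneg _)
  have h_end : |P b * D b| ≤ |P b| * ε := by
    rw [abs_mul]
    exact mul_le_mul_of_nonneg_left (hε b (right_mem_Icc.mpr hab)) (abs_nonneg _)
  rw [h_deriv, hP.integral_mul_deriv_eq_deriv_mul hD]
  simp only [D, intervalIntegral.integral_same, mul_zero, sub_zero]
  calc _ ≤ |P b * D b| + |∫ s in a..b, deriv P s * D s| := abs_sub _ _
    _ ≤ _ := by linarith

lemma mem_Icc_of_infDist_Icc_le {a b v δ : ℝ} (hab : a ≤ b) (h : infDist v (Icc a b) ≤ δ) :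
    v ∈ Icc (a - δ) (b + δ) := by
  obtain ⟨k, hk, hvk⟩ := isCompact_Icc.exists_infDist_eq_dist (nonempty_Icc.mpr hab) v
  rw [hvk, Real.dist_eq, abs_le] at h
  exact ⟨by linarith [hk.1, h.2], by linarith [hk.2, h.1]⟩

lemma abs_min_max_sub_le {p q δ : ℝ} (hδ : 0 ≤ δ) :
    |min (max p (q - δ)) (q + δ) - q| ≤ δ :=
  abs_le.mpr ⟨by linarith [le_min (le_max_right p (q - δ)) (by linarith : q - δ ≤ q + δ)],
    by linarith [min_le_right (max p (q - δ)) (q + δ)]⟩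

lemma min_max_mem_Icc {p q δ lo hi : ℝ} (hp : p ∈ Icc lo hi)
    (hq : q ∈ Icc (lo - δ) (hi + δ)) :
    min (max p (q - δ)) (q + δ) ∈ Icc lo hi :=
  ⟨le_min (le_max_of_le_left hp.1) (by linarith [hq.1]),
    min_le_of_left_le (max_le hp.2 (by linarith [hq.2]))⟩

lemma Monotone.min_max_sub_add {F₀ F : ℝ → ℝ} (h₀ : Monotone F₀) (h : Monotone F)
    (δ : ℝ) :
    Monotone fun s => min (max (F₀ s) (F s - δ)) (F s + δ) :=
  fun _ _ hpq => min_le_min (max_le_max (h₀ hpq) (by linarith [h hpq])) (by linarith [h hpq])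

lemma LipschitzWith.min_max_sub_add {F₀ F : ℝ → ℝ} {K : ℝ≥0}
    (h₀ : LipschitzWith K F₀) (h : LipschitzWith K F) (δ : ℝ) :
    LipschitzWith K fun s => min (max (F₀ s) (F s - δ)) (F s + δ) := by
  have h_sub : LipschitzWith K fun s => F s - δ :=
    LipschitzWith.of_dist_le_mul fun p q => by
      simpa only [dist_sub_right] using h.dist_le_mul p q
  have h_add : LipschitzWith K fun s => F s + δ :=
    LipschitzWith.of_dist_le_mul fun p q => by
      simpa only [dist_add_right] using h.dist_le_mul p q
  simpa using (h₀.max h_sub).min h_add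

section Controls

variable {t T ubar ybar x b y z : ℝ} {β u v : ℝ → ℝ}

lemma isControl_zero (hub : 0 ≤ ubar) : IsControl t T ubar 0 :=
  ⟨measurable_const, ae_of_all _ fun _ _ => ⟨le_rfl, hub⟩⟩

lemma IsControl.intervalIntegrable (hu : IsControl t T ubar u) (htT : t ≤ T) :
    IntervalIntegrable u volume t T := by
  refine (intervalIntegrable_const (c := ubar)).mono_fun hu.1.aestronglyMeasurable
    ((ae_restrict_iff' measurableSet_uIoc).mpr (hu.2.mono fun s hs hs_mem => ?_))
  rw [← uIcc_of_le htT] at hs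
  obtain ⟨h₀, h₁⟩ := hs (uIoc_subset_uIcc hs_mem)
  dsimp only
  rw [Real.norm_of_nonneg h₀, Real.norm_of_nonneg (h₀.trans h₁)]
  exact h₁

lemma IsControl.exists_bounded (hu : IsControl t T ubar u) (hub : 0 ≤ ubar) :
    ∃ v, Measurable v ∧ (∀ s, v s ∈ Icc 0 ubar) ∧
      v =ᵐ[volume.restrict (Icc t T)] u := by
  refine ⟨fun s => max 0 (min (u s) ubar), measurable_const.max (hu.1.min measurable_const),
    fun s => ⟨le_max_left _ _, max_le hub (min_le_right _ _)⟩,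
    (ae_restrict_iff' measurableSet_Icc).mpr (hu.2.mono fun s hs hs_mem => ?_)⟩
  simp only [min_eq_left (hs hs_mem).2, max_eq_right (hs hs_mem).1]

lemma traj_congr_ae (h : v =ᵐ[volume.restrict (Icc t T)] u) {s : ℝ} (hs : s ∈ Icc t T) :
    traj t β y v s = traj t β y u s := by
  refine congrArg (y + ·) (intervalIntegral.integral_congr_ae_restrict ?_)
  refine ae_restrict_of_ae_restrict_of_subset ?_ (h.mono fun r hr => by simp only [hr])
  rw [uIoc_of_le hs.1]
  exact Ioc_subset_Icc_self.trans (Icc_subset_Icc_right hs.2)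

lemma levelCost_congr_ae (h : v =ᵐ[volume.restrict (Icc t T)] u) (htT : t ≤ T) :
    levelCost t T ubar ybar x b β y z v = levelCost t T ubar ybar x b β y z u := by
  have h_sub : uIoc t T ⊆ Icc t T := by rw [uIoc_of_le htT]; exact Ioc_subset_Icc_self
  have h_payoff : ∫ s in t..T, price t x b s * (v s - ubar)
      = ∫ s in t..T, price t x b s * (u s - ubar) :=
    intervalIntegral.integral_congr_ae_restrict
      (ae_restrict_of_ae_restrict_of_subset h_sub (h.mono fun r hr => by simp only [hr]))
  have h_penalty : ∫ s in t..T, infDist (traj t β y v s) (Icc 0 ybar)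
      = ∫ s in t..T, infDist (traj t β y u s) (Icc 0 ybar) :=
    intervalIntegral.integral_congr fun s hs => by
      rw [uIcc_of_le htT] at hs
      simp only [traj_congr_ae h hs]
  rw [levelCost, levelCost, h_payoff, h_penalty]

lemma traj_eq_sub {s : ℝ} (hβ : IntervalIntegrable β volume t s)
    (hv : IntervalIntegrable v volume t s) :
    traj t β y v s = y + (∫ r in t..s, β r) - ∫ r in t..s, v r := by
  rw [traj, intervalIntegral.integral_sub hβ hv]
  ring

lemma lipschitzWith_traj {M : ℝ} (hβ : Measurable β) (hβM : ∀ s, |β s| ≤ M)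
    (hv : Measurable v) (hvb : ∀ s, v s ∈ Icc 0 ubar) :
    LipschitzWith (M + ubar).toNNReal (traj t β y v) := by
  have h_bound : ∀ s, |β s - v s| ≤ M + ubar := fun s =>
    (abs_sub _ _).trans (add_le_add (hβM s) ((abs_of_nonneg (hvb s).1).trans_le (hvb s).2))
  exact LipschitzWith.of_dist_le_mul fun p q => by
    simpa only [traj, dist_add_left] using
      (lipschitzWith_primitive (f := fun s => β s - v s) (hβ.sub hv) h_bound t).dist_le_mul p q

end Controls

section LevelSet

variable {t T ubar ybar x b y z : ℝ} {β u : ℝ → ℝ}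

lemma contDiff_price (t x b : ℝ) : ContDiff ℝ 1 (price t x b) := by
  unfold price
  fun_prop

lemma levelCost_nonneg (htT : t ≤ T) (z : ℝ) (u : ℝ → ℝ) :
    0 ≤ levelCost t T ubar ybar x b β y z u :=
  add_nonneg (le_max_right _ _) (intervalIntegral.integral_nonneg htT fun _ _ => infDist_nonneg)

lemma W_le_levelCost (htT : t ≤ T) (hu : IsControl t T ubar u) :
    W t T ubar ybar x b β y z ≤ levelCost t T ubar ybar x b β y z u :=
  csInf_le ⟨0, by rintro _ ⟨u, -, rfl⟩; exact levelCost_nonneg htT z u⟩ ⟨u, hu, rfl⟩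

lemma W_nonneg (htT : t ≤ T) (hub : 0 ≤ ubar) : 0 ≤ W t T ubar ybar x b β y z :=
  le_csInf ⟨_, 0, isControl_zero hub, rfl⟩
    (by rintro _ ⟨u, -, rfl⟩; exact levelCost_nonneg htT z u)

lemma exists_levelCost_lt_of_W_lt (hub : 0 ≤ ubar) {ε : ℝ}
    (h : W t T ubar ybar x b β y z < ε) :
    ∃ u, IsControl t T ubar u ∧ levelCost t T ubar ybar x b β y z u < ε := by
  have h_ne : {c | ∃ u, IsControl t T ubar u ∧
      c = levelCost t T ubar ybar x b β y z u}.Nonempty :=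
    ⟨_, 0, isControl_zero hub, rfl⟩
  obtain ⟨_, ⟨u, hu, rfl⟩, hlt⟩ := exists_lt_of_csInf_lt h_ne h
  exact ⟨u, hu, hlt⟩

lemma sub_lt_and_penalty_lt_of_levelCost_lt (htT : t ≤ T) {ε : ℝ}
    (h : levelCost t T ubar ybar x b β y z u < ε) :
    z - ∫ s in t..T, price t x b s * (u s - ubar) < ε ∧
      ∫ s in t..T, infDist (traj t β y u s) (Icc 0 ybar) < ε := by
  have h_penalty : 0 ≤ ∫ s in t..T, infDist (traj t β y u s) (Icc 0 ybar) :=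
    intervalIntegral.integral_nonneg htT fun _ _ => infDist_nonneg
  rw [levelCost] at h
  constructor <;> linarith [le_max_left (z - ∫ s in t..T, price t x b s * (u s - ubar)) 0,
    le_max_right (z - ∫ s in t..T, price t x b s * (u s - ubar)) 0]

lemma integral_price_mul_sub (hu : IntervalIntegrable u volume t T) :
    ∫ s in t..T, price t x b s * (u s - ubar)
      = (∫ s in t..T, price t x b s * u s) - G t T ubar x b := by
  have h_price := (contDiff_price t x b).continuous
  simp_rw [mul_sub]
  rw [intervalIntegral.integral_sub (hu.continuousOn_mul h_price.continuousOn)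
    (h_price.intervalIntegrable t T |>.mul_const ubar), intervalIntegral.integral_mul_const, G,
    mul_comm]

lemma integral_price_mul_le_G (hx : 0 ≤ x) (htT : t ≤ T) (hu : IsControl t T ubar u) :
    ∫ s in t..T, price t x b s * u s ≤ G t T ubar x b := by
  have h_price := (contDiff_price t x b).continuous
  rw [G, mul_comm, ← intervalIntegral.integral_mul_const]
  refine intervalIntegral.integral_mono_ae_restrict htT
    ((hu.intervalIntegrable htT).continuousOn_mul h_price.continuousOn)
    (h_price.intervalIntegrable t T |>.mul_const ubar)
    ((ae_restrict_iff' measurableSet_Icc).mpr (hu.2.mono fun s hs hs_mem => ?_))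
  exact mul_le_mul_of_nonneg_left (hs hs_mem).2 (mul_nonneg hx (Real.exp_pos _).le)

lemma W_eq_zero_of_admissible (htT : t ≤ T) (hub : 0 ≤ ubar)
    (hu : Admissible t T ubar ybar β y u) :
    W t T ubar ybar x b β y
      ((∫ s in t..T, price t x b s * u s) - G t T ubar x b) = 0 := by
  refine le_antisymm ((W_le_levelCost htT hu.1).trans_eq ?_) (W_nonneg htT hub)
  have h_penalty : ∫ s in t..T, infDist (traj t β y u s) (Icc 0 ybar) = 0 := by
    refine (intervalIntegral.integral_congr fun s hs => ?_).trans intervalIntegral.integral_zero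
    exact infDist_zero_of_mem (hu.2 s (uIcc_of_le htT ▸ hs))
  simp [levelCost, h_penalty, integral_price_mul_sub (hu.1.intervalIntegrable htT)]

end LevelSet

section Approximation

variable {t T ubar ybar x b y z M : ℝ} {β v : ℝ → ℝ}

lemma traj_mem_Icc_of_penalty_lt (hyb : 0 ≤ ybar) (hL : 0 < M + ubar) (hβ : Measurable β)
    (hβM : ∀ s, |β s| ≤ M) (hv : Measurable v) (hvb : ∀ s, v s ∈ Icc 0 ubar) {δ : ℝ}
    (hδ : 0 < δ) (hpen : ∫ s in t..T, infDist (traj t β y v s) (Icc 0 ybar)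
      < min (δ / (2 * (M + ubar))) ((T - t) / 2) * (δ / 2)) :
    ∀ s ∈ Icc t T, traj t β y v s ∈ Icc (-δ) (ybar + δ) := by
  intro s hs
  have h_lip :
      LipschitzWith (M + ubar).toNNReal fun s => infDist (traj t β y v s) (Icc 0 ybar) := by
    simpa [Function.comp_def] using
      (lipschitz_infDist_pt _).comp (lipschitzWith_traj (y := y) hβ hβM hv hvb)
  have h_dist : infDist (traj t β y v s) (Icc 0 ybar) ≤ δ := by
    by_contra! h
    exact hpen.not_ge
      (mul_le_integral_of_lipschitzWith hL (fun _ => infDist_nonneg) h_lip hs hδ h.le)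
  simpa using mem_Icc_of_infDist_Icc_le hyb h_dist

lemma exists_admissible_primitive_near {u₀ : ℝ → ℝ} (hub : 0 ≤ ubar) (hβ : Measurable β)
    (hβM : ∀ s, |β s| ≤ M) (hu₀ : Admissible t T ubar ybar β y u₀) (hv : Measurable v)
    (hvb : ∀ s, v s ∈ Icc 0 ubar) {δ : ℝ} (hδ : 0 ≤ δ)
    (hwin : ∀ s ∈ Icc t T, traj t β y v s ∈ Icc (-δ) (ybar + δ)) :
    ∃ w, Admissible t T ubar ybar β y w ∧
      ∀ s ∈ Icc t T, |∫ r in t..s, (w r - v r)| ≤ δ := by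
  obtain ⟨v₀, hv₀, hv₀b, hv₀u₀⟩ := hu₀.1.exists_bounded hub
  have h_abs : ∀ {f : ℝ → ℝ}, (∀ s, f s ∈ Icc 0 ubar) → ∀ s, |f s| ≤ ubar :=
    fun hf s => (abs_of_nonneg (hf s).1).trans_le (hf s).2
  have h_traj : ∀ {f : ℝ → ℝ}, Measurable f → (∀ s, f s ∈ Icc 0 ubar) → ∀ s,
      traj t β y f s = y + (∫ r in t..s, β r) - ∫ r in t..s, f r := fun hf hfb s =>
    traj_eq_sub (intervalIntegrable_of_abs_le hβ hβM t s)
      (intervalIntegrable_of_abs_le hf (h_abs hfb) t s)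
  set F := fun s => ∫ r in t..s, v r
  set F₀ := fun s => ∫ r in t..s, v₀ r
  set Φ := fun s => min (max (F₀ s) (F s - δ)) (F s + δ)
  have hΦ_mono : Monotone Φ :=
    (monotone_primitive hv₀ (h_abs hv₀b) (fun s => (hv₀b s).1) t).min_max_sub_add
      (monotone_primitive hv (h_abs hvb) (fun s => (hvb s).1) t) δ
  have hΦ_lip : LipschitzWith ubar.toNNReal Φ :=
    (lipschitzWith_primitive hv₀ (h_abs hv₀b) t).min_max_sub_add
      (lipschitzWith_primitive hv (h_abs hvb) t) δ
  have hΦ_int : ∀ s, ∫ r in t..s, deriv Φ r = Φ s := fun s => by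
    rw [hΦ_lip.lipschitzOnWith.absolutelyContinuousOnInterval.integral_deriv_eq_sub]
    simp [Φ, F, F₀, hδ]
  have hw_b : ∀ s, deriv Φ s ∈ Icc 0 ubar := by
    simpa [Real.coe_toNNReal _ hub] using hΦ_mono.deriv_mem_Icc hΦ_lip
  have hw_ctrl : IsControl t T ubar (deriv Φ) :=
    ⟨measurable_deriv Φ, ae_of_all _ fun s _ => hw_b s⟩
  refine ⟨deriv Φ, ⟨hw_ctrl, fun s hs => ?_⟩, fun s hs => ?_⟩
  · have h₀ := hu₀.2 s hs
    rw [← traj_congr_ae hv₀u₀ hs, h_traj hv₀ hv₀b] at h₀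
    have h₁ := hwin s hs
    rw [h_traj hv hvb] at h₁
    have := min_max_mem_Icc (p := F₀ s) (q := F s) (δ := δ)
      (lo := y + (∫ r in t..s, β r) - ybar) (hi := y + ∫ r in t..s, β r)
      ⟨by linarith [h₀.2], by linarith [h₀.1]⟩
      ⟨by linarith [h₁.2], by linarith [h₁.1]⟩
    rw [h_traj (measurable_deriv Φ) hw_b, hΦ_int]
    exact ⟨by linarith [this.2], by linarith [this.1]⟩
  · rw [intervalIntegral.integral_sub
      (intervalIntegrable_of_abs_le (measurable_deriv Φ) (h_abs hw_b) t s)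
      (intervalIntegrable_of_abs_le hv (h_abs hvb) t s), hΦ_int]
    exact abs_min_max_sub_le hδ

lemma exists_abs_integral_price_mul_le (htT : t ≤ T) :
    ∃ C, 0 ≤ C ∧ ∀ (w : ℝ → ℝ) (ε : ℝ), IntervalIntegrable w volume t T →
      (∀ s ∈ Icc t T, |∫ r in t..s, w r| ≤ ε) →
      |∫ s in t..T, price t x b s * w s| ≤ C * ε := by
  refine ⟨_, ?_, fun w ε hw hε => abs_integral_mul_le_of_abs_primitive_le htT
    (contDiff_price t x b).contDiffOn.absolutelyContinuousOnInterval hw hε⟩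
  exact add_nonneg (abs_nonneg _) (intervalIntegral.integral_nonneg htT fun _ _ => abs_nonneg _)

lemma exists_admissible_integral_price_mul_ge {u₀ : ℝ → ℝ} (htT : t ≤ T) (hub : 0 < ubar)
    (hyb : 0 ≤ ybar) (hβ : Measurable β) (hβM : ∀ s, |β s| ≤ M)
    (hu₀ : Admissible t T ubar ybar β y u₀) (hz : z ≤ 0)
    (hW : W t T ubar ybar x b β y z = 0) {η : ℝ} (hη : 0 < η) :
    ∃ u, Admissible t T ubar ybar β y u ∧
      z + G t T ubar x b - η ≤ ∫ s in t..T, price t x b s * u s := by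
  rcases htT.eq_or_lt with rfl | hlt
  · exact ⟨u₀, hu₀, by simp only [G, intervalIntegral.integral_same]; linarith⟩
  obtain ⟨C, hC₀, hC⟩ := exists_abs_integral_price_mul_le (x := x) (b := b) htT
  have hL : 0 < M + ubar := by linarith [(abs_nonneg _).trans (hβM 0)]
  set δ := η / (2 * (C + 1))
  have hδ : 0 < δ := by positivity
  have hCδ : C * δ ≤ η / 2 := by
    rw [mul_div_assoc', div_le_div_iff₀ (by positivity) two_pos]
    nlinarith
  set ρ := min (δ / (2 * (M + ubar))) ((T - t) / 2)
  have hρ : 0 < ρ := lt_min (by positivity) (by linarith)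
  set ε := min (ρ * (δ / 2)) (η / 2)
  have hε : W t T ubar ybar x b β y z < ε := hW ▸ lt_min (by positivity) (by positivity)
  obtain ⟨u, hu, hcost⟩ := exists_levelCost_lt_of_W_lt hub.le hε
  obtain ⟨v, hv, hvb, hvu⟩ := hu.exists_bounded hub.le
  have hv_ctrl : IsControl t T ubar v := ⟨hv, ae_of_all _ fun s _ => hvb s⟩
  rw [← levelCost_congr_ae hvu htT] at hcost
  obtain ⟨h_payoff, h_penalty⟩ := sub_lt_and_penalty_lt_of_levelCost_lt htT hcost
  rw [integral_price_mul_sub (hv_ctrl.intervalIntegrable htT)] at h_payoff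
  have h_window := traj_mem_Icc_of_penalty_lt hyb hL hβ hβM hv hvb hδ
    (h_penalty.trans_le (min_le_left _ _))
  obtain ⟨w, hw, hwv⟩ :=
    exists_admissible_primitive_near hub.le hβ hβM hu₀ hv hvb hδ.le h_window
  have hv_int := hv_ctrl.intervalIntegrable htT
  have hw_int := hw.1.intervalIntegrable htT
  have h_close := hC (fun s => w s - v s) δ (hw_int.sub hv_int) hwv
  have h_price := (contDiff_price t x b).continuous
  simp only [mul_sub] at h_close
  rw [intervalIntegral.integral_sub (hw_int.continuousOn_mul h_price.continuousOn)
    (hv_int.continuousOn_mul h_price.continuousOn)] at h_close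
  exact ⟨w, hw, by linarith [(abs_le.mp h_close).1, min_le_right (ρ * (δ / 2)) (η / 2)]⟩

end Approximation

theorem stmt0_general (t T ubar ybar b x y : ℝ) (β : ℝ → ℝ)
    (htT : t ≤ T) (hub : 0 < ubar) (hyb : 0 < ybar)
    (hβm : Measurable β) (hβb : ∃ M, ∀ s, |β s| ≤ M)
    (hx : 0 ≤ x) (hadm : ∃ u, Admissible t T ubar ybar β y u) :
    {z : ℝ | z ≤ 0 ∧ W t T ubar ybar x b β y z = 0}.Nonempty ∧
      sSup {v : ℝ | ∃ u, Admissible t T ubar ybar β y u ∧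
            v = ∫ s in t..T, price t x b s * u s}
        = sSup {z : ℝ | z ≤ 0 ∧ W t T ubar ybar x b β y z = 0} + G t T ubar x b := by
  obtain ⟨M, hβM⟩ := hβb
  obtain ⟨u₀, hu₀⟩ := hadm
  have h_mem : ∀ u, Admissible t T ubar ybar β y u →
      (∫ s in t..T, price t x b s * u s) - G t T ubar x b
        ∈ {z : ℝ | z ≤ 0 ∧ W t T ubar ybar x b β y z = 0} := fun u hu =>
    ⟨by linarith [integral_price_mul_le_G (b := b) hx htT hu.1],
      W_eq_zero_of_admissible htT hub.le hu⟩
  refine ⟨⟨_, h_mem u₀ hu₀⟩, csSup_eq_csSup_add_of_approx _ ⟨_, u₀, hu₀, rfl⟩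
    ⟨0, fun z hz => hz.1⟩ (by rintro _ ⟨u, hu, rfl⟩; exact h_mem u hu)
    fun z hz η hη => ?_⟩
  obtain ⟨u, hu, hle⟩ :=
    exists_admissible_integral_price_mul_ge htT hub hyb.le hβm hβM hu₀ hz.1 hz.2 hη
  exact ⟨_, ⟨u, hu, rfl⟩, hle⟩

/-- Theorem 5.1 (deterministic-price instance): level-set representation of the value. -/
theorem stmt0 (t T ubar ybar b x y : ℝ) (β : ℝ → ℝ)
    (ht : 0 ≤ t) (htT : t ≤ T) (hub : 0 < ubar) (hyb : 0 < ybar)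
    (hβm : Measurable β) (hβb : ∃ M, ∀ s, |β s| ≤ M)
    (hx : 0 ≤ x) (hadm : ∃ u, Admissible t T ubar ybar β y u) :
    {z : ℝ | z ≤ 0 ∧ W t T ubar ybar x b β y z = 0}.Nonempty ∧
      sSup {v : ℝ | ∃ u, Admissible t T ubar ybar β y u ∧
            v = ∫ s in t..T, price t x b s * u s}
        = sSup {z : ℝ | z ≤ 0 ∧ W t T ubar ybar x b β y z = 0} + G t T ubar x b :=
  stmt0_general t T ubar ybar b x y β htT hub hyb hβm hβb hx hadm
end
end

section
/- Let M ≥ 0 be a bound with |β(s)| ≤ M for all s ∈ [t,T]. Then for every x ≥ 0, y ∈ K and z ∈ ℝ one has |W(t,x,y,z) − max(z,0)| ≤ ū·x·∫_t^T e^{b(s−t)} ds + (M + ū)·(T − t)². In particular, for fixed (x,y,z) with y ∈ K, W(t,x,y,z) → max(z,0) as t → T. -/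
open MeasureTheory

noncomputable section

/-! The control `u ≡ 0` costs at most `max z 0 + G + M (T - t)² / 2`: the revenue term is then
exactly `-G`, and the level drifts away from `y ∈ K` at speed at most `M`. Conversely every
control has revenue term of absolute value at most `G`, so its cost is at least `max z 0 - G`.
Both bounds vanish as `t → T`, since `G ≤ ū x (T - t) e^{|b| (T - t)}`. -/

lemma abs_intervalIntegral_mul_sub_le {p u : ℝ → ℝ} {t T c : ℝ} (htT : t ≤ T)
    (hp : IntervalIntegrable p volume t T) (hp0 : ∀ s ∈ Set.Icc t T, 0 ≤ p s)
    (hu : ∀ᵐ s, s ∈ Set.Icc t T → u s ∈ Set.Icc 0 c) :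
    |∫ s in t..T, p s * (u s - c)| ≤ c * ∫ s in t..T, p s := by
  rw [← intervalIntegral.integral_const_mul, ← Real.norm_eq_abs]
  refine intervalIntegral.norm_integral_le_of_norm_le htT ?_ (hp.const_mul c)
  filter_upwards [hu] with s hus hs
  obtain ⟨hu0, huc⟩ := hus (Set.Ioc_subset_Icc_self hs)
  rw [norm_mul, Real.norm_of_nonneg (hp0 s (Set.Ioc_subset_Icc_self hs)), Real.norm_eq_abs,
    abs_of_nonpos (by linarith), mul_comm]
  exact mul_le_mul_of_nonneg_right (by linarith) (hp0 s (Set.Ioc_subset_Icc_self hs))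

lemma price_nonneg {t x : ℝ} (b s : ℝ) (hx : 0 ≤ x) : 0 ≤ price t x b s :=
  mul_nonneg hx (Real.exp_pos _).le

lemma continuous_price (t x b : ℝ) : Continuous (price t x b) := by
  unfold price
  fun_prop

lemma G_nonneg {t T ubar x : ℝ} (b : ℝ) (htT : t ≤ T) (hub : 0 ≤ ubar) (hx : 0 ≤ x) :
    0 ≤ G t T ubar x b :=
  mul_nonneg hub (intervalIntegral.integral_nonneg htT fun s _ => price_nonneg b s hx)

lemma G_eq_mul_integral_exp (t T ubar x b : ℝ) :
    G t T ubar x b = ubar * x * ∫ s in t..T, Real.exp (b * (s - t)) := by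
  rw [G, mul_assoc]
  exact congrArg (ubar * ·) (intervalIntegral.integral_const_mul x _)

section LevelCost

variable {t T ubar ybar x b M y : ℝ} {β : ℝ → ℝ}

lemma max_sub_G_le_levelCost (z : ℝ) {u : ℝ → ℝ} (htT : t ≤ T) (hx : 0 ≤ x)
    (hu : IsControl t T ubar u) :
    max z 0 - G t T ubar x b ≤ levelCost t T ubar ybar x b β y z u := by
  set I := ∫ s in t..T, price t x b s * (u s - ubar)
  have hI : |I| ≤ G t T ubar x b :=
    abs_intervalIntegral_mul_sub_le htT ((continuous_price t x b).intervalIntegrable t T)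
      (fun s _ => price_nonneg b s hx) hu.2
  have hmax : |max z 0 - max (z - I) 0| ≤ |I| := by
    simpa using abs_max_sub_max_le_abs z (z - I) 0
  have hdist : 0 ≤ ∫ s in t..T, Metric.infDist (traj t β y u s) (Set.Icc 0 ybar) :=
    intervalIntegral.integral_nonneg htT fun s _ => Metric.infDist_nonneg
  rw [levelCost]
  linarith [le_abs_self (max z 0 - max (z - I) 0)]

lemma infDist_traj_zero_le {K : Set ℝ} (hβ : ∀ s ∈ Set.Icc t T, |β s| ≤ M) (hy : y ∈ K)
    {s : ℝ} (hs : s ∈ Set.Icc t T) :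
    Metric.infDist (traj t β y 0 s) K ≤ M * (s - t) := by
  have hdrift : |∫ r in t..s, β r| ≤ M * (s - t) := by
    have h := intervalIntegral.norm_integral_le_of_norm_le_const (a := t) (b := s) (C := M)
      (f := β)
      fun r hr => by
        rw [Set.uIoc_of_le hs.1] at hr
        exact hβ r ⟨hr.1.le, hr.2.trans hs.2⟩
    rwa [Real.norm_eq_abs, abs_of_nonneg (sub_nonneg.2 hs.1)] at h
  calc Metric.infDist (traj t β y 0 s) K ≤ dist (traj t β y 0 s) y :=
        Metric.infDist_le_dist_of_mem hy
    _ = |∫ r in t..s, β r| := by simp [traj]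
    _ ≤ M * (s - t) := hdrift

lemma integral_infDist_traj_zero_le {K : Set ℝ} (htT : t ≤ T)
    (hβ : ∀ s ∈ Set.Icc t T, |β s| ≤ M) (hy : y ∈ K) :
    ∫ s in t..T, Metric.infDist (traj t β y 0 s) K ≤ M * (T - t) ^ 2 / 2 := by
  have h : ‖∫ s in t..T, Metric.infDist (traj t β y 0 s) K‖ ≤ ∫ s in t..T, M * (s - t) :=
    intervalIntegral.norm_integral_le_of_norm_le htT
      (.of_forall fun s hs => by
        rw [Real.norm_of_nonneg Metric.infDist_nonneg]
        exact infDist_traj_zero_le hβ hy (Set.Ioc_subset_Icc_self hs))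
      ((by fun_prop : Continuous fun s : ℝ => M * (s - t)).intervalIntegrable t T)
  have hint : ∫ s in t..T, M * (s - t) = M * (T - t) ^ 2 / 2 := by
    simp only [intervalIntegral.integral_const_mul,
      intervalIntegral.integral_comp_sub_right fun s => s, integral_id, sub_self]
    ring
  rwa [Real.norm_of_nonneg (intervalIntegral.integral_nonneg htT fun _ _ => Metric.infDist_nonneg),
    hint] at h

lemma levelCost_zero_le (z : ℝ) (htT : t ≤ T) (hub : 0 ≤ ubar) (hx : 0 ≤ x)
    (hβ : ∀ s ∈ Set.Icc t T, |β s| ≤ M) (hy : y ∈ Set.Icc 0 ybar) :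
    levelCost t T ubar ybar x b β y z 0
      ≤ max z 0 + G t T ubar x b + M * (T - t) ^ 2 / 2 := by
  have hrevenue :
      ∫ s in t..T, price t x b s * ((0 : ℝ → ℝ) s - ubar) = -G t T ubar x b := by
    simp only [Pi.zero_apply, zero_sub, mul_neg, intervalIntegral.integral_neg, G,
      ← intervalIntegral.integral_const_mul, mul_comm]
  have hG := G_nonneg b htT hub hx
  have hmax : max (z + G t T ubar x b) 0 ≤ max z 0 + G t T ubar x b :=
    max_le (by linarith [le_max_left z 0]) (by linarith [le_max_right z 0])
  rw [levelCost, hrevenue, sub_neg_eq_add]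
  linarith [integral_infDist_traj_zero_le htT hβ hy]

lemma abs_W_sub_max_le (z : ℝ) (htT : t ≤ T) (hub : 0 ≤ ubar) (hx : 0 ≤ x)
    (hβ : ∀ s ∈ Set.Icc t T, |β s| ≤ M) (hy : y ∈ Set.Icc 0 ybar) :
    |W t T ubar ybar x b β y z - max z 0| ≤ G t T ubar x b + M * (T - t) ^ 2 / 2 := by
  have hzero : IsControl t T ubar 0 :=
    ⟨measurable_const, .of_forall fun _ _ => ⟨le_rfl, hub⟩⟩
  have hlower :
      ∀ c ∈ {c | ∃ u, IsControl t T ubar u ∧ c = levelCost t T ubar ybar x b β y z u},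
        max z 0 - G t T ubar x b ≤ c := by
    rintro c ⟨u, hu, rfl⟩
    exact max_sub_G_le_levelCost z htT hx hu
  have hW_ge : max z 0 - G t T ubar x b ≤ W t T ubar ybar x b β y z :=
    le_csInf ⟨_, 0, hzero, rfl⟩ hlower
  have hW_le : W t T ubar ybar x b β y z ≤ levelCost t T ubar ybar x b β y z 0 :=
    csInf_le ⟨_, hlower⟩ ⟨0, hzero, rfl⟩
  have hzero_le := levelCost_zero_le (b := b) z htT hub hx hβ hy
  have hsq : 0 ≤ M * (T - t) ^ 2 / 2 := by
    have := (abs_nonneg (β t)).trans (hβ t ⟨le_rfl, htT⟩)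
    positivity
  rw [abs_le]
  constructor <;> linarith

end LevelCost

lemma integral_exp_mul_sub_le (b : ℝ) {t T : ℝ} (htT : t ≤ T) :
    ∫ s in t..T, Real.exp (b * (s - t)) ≤ (T - t) * Real.exp (|b| * (T - t)) := by
  have h := intervalIntegral.norm_integral_le_of_norm_le_const (a := t) (b := T)
    (C := Real.exp (|b| * (T - t))) (f := fun s => Real.exp (b * (s - t))) fun s hs => by
      rw [Set.uIoc_of_le htT] at hs
      rw [Real.norm_of_nonneg (Real.exp_pos _).le, Real.exp_le_exp]
      calc b * (s - t) ≤ |b| * (s - t) :=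
            mul_le_mul_of_nonneg_right (le_abs_self b) (by linarith [hs.1])
        _ ≤ |b| * (T - t) := mul_le_mul_of_nonneg_left (by linarith [hs.2]) (abs_nonneg b)
  rw [abs_of_nonneg (sub_nonneg.2 htT), mul_comm] at h
  exact (le_abs_self _).trans h

theorem stmt6_general (t T ubar ybar b M : ℝ) (β : ℝ → ℝ)
    (htT : t ≤ T) (hub : 0 < ubar)
    (hM : 0 ≤ M) (hβbd : ∀ s ∈ Set.Icc t T, |β s| ≤ M) :
    (∀ x, 0 ≤ x → ∀ y ∈ Set.Icc 0 ybar, ∀ z : ℝ,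
      |W t T ubar ybar x b β y z - max z 0|
        ≤ ubar * x * (∫ s in t..T, Real.exp (b * (s - t))) + (M + ubar) * (T - t) ^ 2) ∧
    (∀ x, 0 ≤ x → ∀ y ∈ Set.Icc 0 ybar, ∀ z : ℝ,
      Filter.Tendsto (fun t' => W t' T ubar ybar x b β y z)
        (nhdsWithin T (Set.Icc t T)) (nhds (max z 0))) := by
  have hbound : ∀ t' ∈ Set.Icc t T, ∀ x, 0 ≤ x → ∀ y ∈ Set.Icc 0 ybar, ∀ z : ℝ,
      |W t' T ubar ybar x b β y z - max z 0|
        ≤ ubar * x * (∫ s in t'..T, Real.exp (b * (s - t'))) + (M + ubar) * (T - t') ^ 2 := by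
    intro t' ht' x hx y hy z
    have h := abs_W_sub_max_le (b := b) z ht'.2 hub.le hx
      (fun s hs => hβbd s ⟨ht'.1.trans hs.1, hs.2⟩) hy
    rw [G_eq_mul_integral_exp] at h
    nlinarith [sq_nonneg (T - t'), hM, hub]
  refine ⟨hbound t ⟨le_rfl, htT⟩, fun x hx y hy z => ?_⟩
  rw [tendsto_iff_norm_sub_tendsto_zero]
  refine squeeze_zero' (.of_forall fun _ => norm_nonneg _) ?_ (g := fun t' =>
    ubar * x * ((T - t') * Real.exp (|b| * (T - t'))) + (M + ubar) * (T - t') ^ 2) ?_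
  · filter_upwards [self_mem_nhdsWithin] with t' ht'
    refine (hbound t' ht' x hx y hy z).trans (add_le_add_left ?_ _)
    exact mul_le_mul_of_nonneg_left (integral_exp_mul_sub_le b ht'.2) (by positivity)
  · have hg : Continuous fun t' : ℝ =>
        ubar * x * ((T - t') * Real.exp (|b| * (T - t'))) + (M + ubar) * (T - t') ^ 2 := by
      fun_prop
    simpa using (hg.tendsto T).mono_left nhdsWithin_le_nhds

/-- Proposition 5.3, terminal-time behaviour (deterministic-price instance):
quantitative estimate `|W(t,x,y,z) − max(z,0)| ≤ ū x ∫_t^T e^{b(s−t)} ds + (M+ū)(T−t)²`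
for `y ∈ K`, and the resulting limit `W(t,x,y,z) → max(z,0)` as `t → T`. -/
theorem stmt6 (t T ubar ybar b M : ℝ) (β : ℝ → ℝ)
    (ht : 0 ≤ t) (htT : t ≤ T) (hub : 0 < ubar) (hyb : 0 < ybar)
    (hβm : Measurable β) (hM : 0 ≤ M) (hβbd : ∀ s ∈ Set.Icc t T, |β s| ≤ M) :
    (∀ x, 0 ≤ x → ∀ y ∈ Set.Icc 0 ybar, ∀ z : ℝ,
      |W t T ubar ybar x b β y z - max z 0|
        ≤ ubar * x * (∫ s in t..T, Real.exp (b * (s - t))) + (M + ubar) * (T - t) ^ 2) ∧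
    (∀ x, 0 ≤ x → ∀ y ∈ Set.Icc 0 ybar, ∀ z : ℝ,
      Filter.Tendsto (fun t' => W t' T ubar ybar x b β y z)
        (nhdsWithin T (Set.Icc t T)) (nhds (max z 0))) :=
  stmt6_general t T ubar ybar b M β htT hub hM hβbd
end
end
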